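/- Let λ be an F-invariant probability measure on ℝ^{2p} and π a probability measure absolutely continuous with respect to λ with density q satisfying Σ_{f ∈ F} q(f(x)) = 2^p for λ-almost all x. Then π = λ on the σ-field G = {A Borel : f⁻¹(A) = A for all f ∈ F} of F-invariant Borel sets. -/

import Mathlib

/-!
Integrate the a.e. identity `∑_S q ∘ f_S = 2^p` over an invariant set `A`. Since each `f_S`
preserves `λ` and `A`, every summand contributes `∫_A q dλ = π A`, so `2^p π(A) = 2^p λ(A)`.
-/

open MeasureTheory Set ENNReal

/-- The swap map `f_S` on `ℝ^p × ℝ^p`. -/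
noncomputable def swapMap (p : ℕ) (S : Finset (Fin p)) :
    ((Fin p → ℝ) × (Fin p → ℝ)) → ((Fin p → ℝ) × (Fin p → ℝ)) :=
  fun z => (fun i => if i ∈ S then z.2 i else z.1 i,
            fun i => if i ∈ S then z.1 i else z.2 i)

section FiniteFamily

variable {α ι : Type*} [MeasurableSpace α] [Fintype ι] {μ : Measure α} {f : ι → α → α}
  {q : α → ℝ≥0∞} {A : Set α}

theorem withDensity_apply_eq_of_sum_comp_eq_card [Nonempty ι]
    (hf : ∀ i, MeasurePreserving (f i) μ μ) (hq : Measurable q)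
    (hsum : ∀ᵐ z ∂μ, ∑ i, q (f i z) = Fintype.card ι)
    (hA : MeasurableSet A) (hAinv : ∀ i, f i ⁻¹' A = A) :
    μ.withDensity q A = μ A := by
  have hcomp : ∀ i, ∫⁻ z in A, q (f i z) ∂μ = ∫⁻ z in A, q z ∂μ := fun i => by
    conv_lhs => rw [← hAinv i]
    exact (hf i).setLIntegral_comp_preimage hA hq
  have hcard : (Fintype.card ι : ℝ≥0∞) * ∫⁻ z in A, q z ∂μ = Fintype.card ι * μ A :=
    calc (Fintype.card ι : ℝ≥0∞) * ∫⁻ z in A, q z ∂μ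
        = ∑ i, ∫⁻ z in A, q (f i z) ∂μ := by simp [hcomp]
      _ = ∫⁻ z in A, ∑ i, q (f i z) ∂μ :=
          (lintegral_finsetSum _ fun i _ => hq.comp (hf i).measurable).symm
      _ = ∫⁻ _ in A, (Fintype.card ι : ℝ≥0∞) ∂μ := lintegral_congr_ae (ae_restrict_of_ae hsum)
      _ = Fintype.card ι * μ A := setLIntegral_const _ _
  rw [withDensity_apply _ hA]
  exact (ENNReal.mul_right_inj (by simp) (natCast_ne_top _)).mp hcard

end FiniteFamily

theorem measurable_swapMap (p : ℕ) (S : Finset (Fin p)) : Measurable (swapMap p S) := by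
  refine (measurable_pi_lambda _ fun i => ?_).prodMk (measurable_pi_lambda _ fun i => ?_) <;>
    split_ifs <;> fun_prop

theorem density_implies_agree_on_invariant_general (p : ℕ)
    (lam π : Measure ((Fin p → ℝ) × (Fin p → ℝ)))
    (hinv : ∀ S : Finset (Fin p), lam.map (swapMap p S) = lam)
    (q : ((Fin p → ℝ) × (Fin p → ℝ)) → ℝ≥0∞) (hq : Measurable q)
    (hπ : π = lam.withDensity q)
    (hsum : ∀ᵐ z ∂lam, ∑ S : Finset (Fin p), q (swapMap p S z) = (2 : ℝ≥0∞) ^ p) :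
    ∀ A : Set ((Fin p → ℝ) × (Fin p → ℝ)), MeasurableSet A →
      (∀ S : Finset (Fin p), swapMap p S ⁻¹' A = A) → π A = lam A := by
  intro A hA hAinv
  have hcard : ((Fintype.card (Finset (Fin p)) : ℕ) : ℝ≥0∞) = 2 ^ p := by simp
  rw [hπ]
  exact withDensity_apply_eq_of_sum_comp_eq_card
    (fun S => ⟨measurable_swapMap p S, hinv S⟩) hq (by simpa only [hcard]) hA hAinv

/-- If `λ` is `F`-invariant and `π = λ.withDensity q` with
`∑_{f ∈ F} q(f(x)) = 2^p` for `λ`-a.e. `x`, then `π = λ` on the σ-field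
`G` of `F`-invariant Borel sets. -/
theorem density_implies_agree_on_invariant (p : ℕ) (hp : 2 ≤ p)
    (lam π : Measure ((Fin p → ℝ) × (Fin p → ℝ)))
    [IsProbabilityMeasure lam] [IsProbabilityMeasure π]
    (hinv : ∀ S : Finset (Fin p), lam.map (swapMap p S) = lam)
    (q : ((Fin p → ℝ) × (Fin p → ℝ)) → ℝ≥0∞) (hq : Measurable q)
    (hπ : π = lam.withDensity q)
    (hsum : ∀ᵐ z ∂lam, ∑ S : Finset (Fin p), q (swapMap p S z) = (2 : ℝ≥0∞) ^ p) :
    ∀ A : Set ((Fin p → ℝ) × (Fin p → ℝ)), MeasurableSet A →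
      (∀ S : Finset (Fin p), swapMap p S ⁻¹' A = A) → π A = lam A :=
  density_implies_agree_on_invariant_general p lam π hinv q hq hπ hsum
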